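/- For all natural numbers m, n, r ≥ 0, B_{n+m,r} = Σ_{k=0}^{m} S_r(m,k) · B_{n,k+r}, where S_r(m,k) is the r-Stirling number of the second kind. -/

import Mathlib

open Finset

/-- Stirling numbers of the second kind. -/
def S2 : ℕ → ℕ → ℕ
  | 0, 0 => 1
  | 0, _ + 1 => 0
  | _ + 1, 0 => 0
  | n + 1, k + 1 => (k + 1) * S2 n (k + 1) + S2 n k

/-- Bell numbers. -/
def bell (n : ℕ) : ℕ := ∑ k ∈ Finset.range (n + 1), S2 n k

/-- r-Stirling numbers of the second kind. -/
def rS2 (r : ℕ) : ℕ → ℕ → ℕ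
  | 0, 0 => 1
  | 0, _ + 1 => 0
  | n + 1, 0 => r * rS2 r n 0
  | n + 1, k + 1 => rS2 r n k + (k + 1 + r) * rS2 r n (k + 1)

/-- Unsigned r-Stirling numbers of the first kind. -/
def rS1 (r : ℕ) : ℕ → ℕ → ℕ
  | 0, 0 => 1
  | 0, _ + 1 => 0
  | n + 1, 0 => (r + n) * rS1 r n 0
  | n + 1, k + 1 => rS1 r n k + (r + n) * rS1 r n (k + 1)

/-- r-Bell numbers for integer r. -/
def rBell (n : ℕ) (r : ℤ) : ℤ :=
  ∑ j ∈ Finset.range (n + 1), (n.choose j : ℤ) * r ^ (n - j) * (bell j : ℤ)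

/-- r-Bell numbers for natural r, via r-Stirling numbers. -/
def rBellNat (n r : ℕ) : ℕ := ∑ k ∈ Finset.range (n + 1), rS2 r n k

lemma S2_eq_zero : ∀ {n k : ℕ}, n < k → S2 n k = 0
  | 0, _+1, _ => rfl
  | n+1, k+1, h => by
      have h1 : n < k + 1 := by omega
      have h2 : n < k := by omega
      simp [S2, S2_eq_zero h1, S2_eq_zero h2]

lemma S2_succ_sum (n : ℕ) : ∀ k : ℕ, S2 (n+1) (k+1) = ∑ j ∈ range (n+1), n.choose j * S2 j k := by
  induction n with
  | zero => intro k; cases k <;> simp [S2]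
  | succ n ih =>
    intro k
    have key : ∑ j ∈ range (n+2), (n+1).choose j * S2 j k
        = S2 (n+1) (k+1) + ∑ i ∈ range (n+1), n.choose i * S2 (i+1) k := by
      calc ∑ j ∈ range (n+2), (n+1).choose j * S2 j k
          = (∑ i ∈ range (n+1), (n+1).choose (i+1) * S2 (i+1) k) + (n+1).choose 0 * S2 0 k :=
            Finset.sum_range_succ' _ (n+1)
        _ = (∑ i ∈ range (n+1), (n.choose i * S2 (i+1) k + n.choose (i+1) * S2 (i+1) k))
              + n.choose 0 * S2 0 k := by
            simp [Nat.choose_succ_succ, Nat.add_mul]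
        _ = ((∑ i ∈ range (n+1), n.choose (i+1) * S2 (i+1) k) + n.choose 0 * S2 0 k)
              + ∑ i ∈ range (n+1), n.choose i * S2 (i+1) k := by
            rw [Finset.sum_add_distrib]; ring
        _ = (∑ j ∈ range (n+2), n.choose j * S2 j k)
              + ∑ i ∈ range (n+1), n.choose i * S2 (i+1) k := by
            rw [Finset.sum_range_succ' (fun j => n.choose j * S2 j k) (n+1)]
        _ = S2 (n+1) (k+1) + ∑ i ∈ range (n+1), n.choose i * S2 (i+1) k := by
            rw [Finset.sum_range_succ, Nat.choose_succ_self, ih k]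
            simp
    rw [key]
    cases k with
    | zero => simp [S2]
    | succ t =>
      have : ∑ i ∈ range (n+1), n.choose i * S2 (i+1) (t+1)
          = (t+1) * S2 (n+1) (t+2) + S2 (n+1) (t+1) := by
        rw [ih (t+1), ih t, Finset.mul_sum, ← Finset.sum_add_distrib]
        exact Finset.sum_congr rfl fun i _ => by simp [S2]; ring
      rw [this]
      show (t+1+1) * S2 (n+1) (t+1+1) + S2 (n+1) (t+1) = _
      ring

lemma bell_succ (n : ℕ) : bell (n+1) = ∑ k ∈ range (n+1), n.choose k * bell k := by
  unfold bell
  rw [Finset.sum_range_succ' (fun k => S2 (n+1) k) (n+1)]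
  simp only [S2_succ_sum n]
  rw [Finset.sum_comm]
  have hz : S2 (n+1) 0 = 0 := rfl
  rw [hz, add_zero]
  refine Finset.sum_congr rfl fun j hj => ?_
  rw [← Finset.mul_sum]
  congr 1
  rw [Finset.mem_range] at hj
  symm
  apply Finset.sum_subset
  · intro x hx; rw [Finset.mem_range] at *; omega
  · intro x _ hx
    rw [Finset.mem_range] at hx
    exact S2_eq_zero (by omega)

lemma binomial_sum (m : ℕ) (r : ℤ) :
    ∑ s ∈ range (m+1), (m.choose s : ℤ) * r ^ (m - s) = (r + 1) ^ m := by
  rw [add_pow]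
  rw [← Finset.sum_range_reflect (fun s => (m.choose s : ℤ) * r ^ (m - s)) (m+1)]
  refine Finset.sum_congr rfl fun s hs => ?_
  rw [Finset.mem_range] at hs
  have h1 : m + 1 - 1 - s = m - s := by omega
  have h2 : m - (m - s) = s := by omega
  rw [h1, h2, Nat.choose_symm (by omega)]
  simp [mul_comm]

lemma lemB (n : ℕ) (r : ℤ) :
    ∑ i ∈ range (n+1), (n.choose i : ℤ) * r ^ (n - i) * (bell (i+1) : ℤ) = rBell n (r+1) := by
  have step1 : ∀ i ∈ range (n+1),
      (n.choose i : ℤ) * r ^ (n - i) * (bell (i+1) : ℤ)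
      = ∑ t ∈ range (n+1), (n.choose i : ℤ) * (i.choose t : ℤ) * r ^ (n - i) * (bell t : ℤ) := by
    intro i hi
    rw [Finset.mem_range] at hi
    have hext : (bell (i+1) : ℤ) = ∑ t ∈ range (n+1), (i.choose t : ℤ) * (bell t : ℤ) := by
      rw [bell_succ i]
      push_cast
      apply Finset.sum_subset
      · intro x hx; rw [Finset.mem_range] at *; omega
      · intro x _ hx
        rw [Finset.mem_range] at hx
        simp [Nat.choose_eq_zero_of_lt (show i < x by omega)]
    rw [hext, Finset.mul_sum]
    exact Finset.sum_congr rfl fun t _ => by ring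
  rw [Finset.sum_congr rfl step1, Finset.sum_comm]
  unfold rBell
  refine Finset.sum_congr rfl fun t ht => ?_
  rw [Finset.mem_range] at ht
  have claim : ∑ i ∈ range (n+1), (n.choose i : ℤ) * (i.choose t : ℤ) * r ^ (n - i)
      = (n.choose t : ℤ) * (r+1) ^ (n - t) := by
    have hsub : Finset.Ico t (n+1) ⊆ range (n+1) := by
      intro x hx; simp only [Finset.mem_Ico, Finset.mem_range] at *; omega
    rw [← Finset.sum_subset hsub (by
      intro x _ hx2
      simp only [Finset.mem_Ico] at hx2
      rw [Finset.mem_range] at *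
      have : x < t := by omega
      simp [Nat.choose_eq_zero_of_lt this])]
    rw [Finset.sum_Ico_eq_sum_range]
    have hlen : n + 1 - t = (n - t) + 1 := by omega
    rw [hlen, ← binomial_sum (n - t) r, Finset.mul_sum]
    refine Finset.sum_congr rfl fun s hs => ?_
    rw [Finset.mem_range] at hs
    have hchoose : n.choose (t + s) * (t + s).choose t = n.choose t * (n - t).choose s := by
      have := Nat.choose_mul (n := n) (show t ≤ t + s by omega)
      simpa using this
    have hc : ((n.choose (t+s) : ℤ)) * (((t+s).choose t : ℤ)) = (n.choose t : ℤ) * (((n-t).choose s : ℤ)) := by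
      exact_mod_cast hchoose
    have hexp : n - (t + s) = (n - t) - s := by omega
    rw [hexp, hc]
    ring
  calc ∑ i ∈ range (n+1), (n.choose i : ℤ) * (i.choose t : ℤ) * r ^ (n - i) * (bell t : ℤ)
      = (∑ i ∈ range (n+1), (n.choose i : ℤ) * (i.choose t : ℤ) * r ^ (n - i)) * (bell t : ℤ) := by
        rw [Finset.sum_mul]
    _ = (n.choose t : ℤ) * (r+1) ^ (n - t) * (bell t : ℤ) := by rw [claim]

lemma rBell_succ (n : ℕ) (r : ℤ) : rBell (n+1) r = r * rBell n r + rBell n (r+1) := by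
  rw [← lemB n r]
  unfold rBell
  rw [Finset.sum_range_succ' (fun j => ((n+1).choose j : ℤ) * r ^ (n + 1 - j) * (bell j : ℤ)) (n+1)]
  have hterm : ∀ i ∈ range (n+1),
      (((n+1).choose (i+1) : ℤ)) * r ^ (n + 1 - (i+1)) * (bell (i+1) : ℤ)
      = (n.choose (i+1) : ℤ) * r ^ (n + 1 - (i+1)) * (bell (i+1) : ℤ)
        + (n.choose i : ℤ) * r ^ (n - i) * (bell (i+1) : ℤ) := by
    intro i hi
    rw [Finset.mem_range] at hi
    have : ((n+1).choose (i+1) : ℤ) = (n.choose i : ℤ) + (n.choose (i+1) : ℤ) := by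
      rw [Nat.choose_succ_succ]; push_cast; ring
    rw [this]
    have : n + 1 - (i + 1) = n - i := by omega
    rw [this]; ring
  rw [Finset.sum_congr rfl hterm, Finset.sum_add_distrib]
  have hA : (∑ i ∈ range (n+1), (n.choose (i+1) : ℤ) * r ^ (n + 1 - (i+1)) * (bell (i+1) : ℤ))
      + ((n+1).choose 0 : ℤ) * r ^ (n + 1 - 0) * (bell 0 : ℤ)
      = r * rBell n r := by
    have : (∑ i ∈ range (n+1), (n.choose (i+1) : ℤ) * r ^ (n + 1 - (i+1)) * (bell (i+1) : ℤ))
        + (n.choose 0 : ℤ) * r ^ (n + 1 - 0) * (bell 0 : ℤ)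
        = ∑ j ∈ range (n+2), (n.choose j : ℤ) * r ^ (n + 1 - j) * (bell j : ℤ) :=
      (Finset.sum_range_succ' (fun j => (n.choose j : ℤ) * r ^ (n + 1 - j) * (bell j : ℤ)) (n+1)).symm
    rw [show ((n+1).choose 0 : ℤ) = (n.choose 0 : ℤ) by simp, this,
      Finset.sum_range_succ]
    simp only [Nat.choose_succ_self, Nat.cast_zero, zero_mul, add_zero]
    unfold rBell
    rw [Finset.mul_sum]
    refine Finset.sum_congr rfl fun j hj => ?_
    rw [Finset.mem_range] at hj
    have : n + 1 - j = (n - j) + 1 := by omega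
    rw [this, pow_succ]
    ring
  rw [add_right_comm, hA]
  rfl

lemma rS2_eq_zero (r : ℕ) : ∀ {m k : ℕ}, m < k → rS2 r m k = 0
  | 0, _+1, _ => rfl
  | m+1, k+1, h => by
      have h1 : m < k + 1 := by omega
      have h2 : m < k := by omega
      simp [rS2, rS2_eq_zero r h1, rS2_eq_zero r h2]

theorem rBell_add_index (m n r : ℕ) :
    rBell (n + m) r = ∑ k ∈ Finset.range (m + 1), (rS2 r m k : ℤ) * rBell n (k + r) := by
  induction m generalizing n with
  | zero => simp [rS2]
  | succ m ih =>
    have hL : rBell (n + (m+1)) r =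
        ∑ k ∈ range (m+1), (rS2 r m k : ℤ) *
          (((k : ℤ) + r) * rBell n ((k : ℤ) + r) + rBell n ((k : ℤ) + r + 1)) := by
      have hnm : n + (m + 1) = (n + 1) + m := by omega
      rw [hnm, ih (n+1)]
      exact Finset.sum_congr rfl fun k _ => by rw [rBell_succ n ((k : ℤ) + r)]
    rw [hL]
    rw [Finset.sum_range_succ' (fun k => (rS2 r (m+1) k : ℤ) * rBell n ((k : ℤ) + r)) (m+1)]
    have hstep : ∀ i ∈ range (m+1),
        (rS2 r (m+1) (i+1) : ℤ) * rBell n (((i+1 : ℕ) : ℤ) + r)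
        = (rS2 r m i : ℤ) * rBell n ((i : ℤ) + r + 1)
          + (((i+1 : ℕ) : ℤ) + r) * (rS2 r m (i+1) : ℤ) * rBell n (((i+1 : ℕ) : ℤ) + r) := by
      intro i _
      have h1 : (rS2 r (m+1) (i+1) : ℤ) = (rS2 r m i : ℤ) + ((i:ℤ)+1+r) * (rS2 r m (i+1) : ℤ) := by
        show ((rS2 r m i + (i + 1 + r) * rS2 r m (i+1) : ℕ) : ℤ) = _
        push_cast; ring
      have h2 : (((i+1 : ℕ) : ℤ) + r) = (i : ℤ) + r + 1 := by push_cast; ring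
      rw [h1, h2]; ring
    rw [Finset.sum_congr rfl hstep, Finset.sum_add_distrib]
    have hB : (∑ i ∈ range (m+1), (((i+1:ℕ):ℤ) + r) * (rS2 r m (i+1) : ℤ) * rBell n (((i+1:ℕ):ℤ) + r))
        + (rS2 r (m+1) 0 : ℤ) * rBell n (((0:ℕ):ℤ) + r)
        = ∑ k ∈ range (m+1), ((k:ℤ) + r) * (rS2 r m k : ℤ) * rBell n ((k:ℤ) + r) := by
      have h0 : (rS2 r (m+1) 0 : ℤ) * rBell n (((0:ℕ):ℤ) + r)
          = (((0:ℕ):ℤ) + r) * (rS2 r m 0 : ℤ) * rBell n (((0:ℕ):ℤ) + r) := by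
        show ((r * rS2 r m 0 : ℕ) : ℤ) * _ = _
        push_cast; ring
      rw [h0, ← Finset.sum_range_succ'
          (fun k => ((k:ℤ) + r) * (rS2 r m k : ℤ) * rBell n ((k:ℤ) + r)) (m+1),
        Finset.sum_range_succ, rS2_eq_zero r (show m < m+1 by omega)]
      simp
    rw [add_assoc, hB, ← Finset.sum_add_distrib]
    exact Finset.sum_congr rfl fun k _ => by ring
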